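/- Every MSTD set A of real numbers with |A| = 8 is affinely isomorphic to A* = {0, 2, 3, 4, 7, 11, 12, 14}; that is, there exist real λ ≠ 0 and μ with A = λ∗A* + μ. (This may be proved assuming Hegarty's classification that every 8-element MSTD set of integers is affinely isomorphic to A*.) -/

import Mathlib

/-!
A `ℚ`-linear functional `ℝ → ℚ` that is injective on `A + A`, scaled to clear the denominators
of its values on `A`, maps `A` Freiman-isomorphically onto a set `B` of integers. Such a map
preserves `|A + A|` and `|A - A|`, so `B` is an 8-element MSTD set and Hegarty's theorem makes it
an affine image of `A*`. Pulling back, the relations `0 + 4 = 2 + 2`, `2 + 4 = 3 + 3`,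
`0 + 7 = 3 + 4` and `0 + 14 = 7 + 7 = 2 + 12 = 3 + 11` in `A*` hold between the corresponding
elements of `A`, and they force `A` to be an affine image of `A*` as well.
-/

open Pointwise

def IsMSTD {G : Type*} [AddCommGroup G] [DecidableEq G] (A : Finset G) : Prop :=
  (A - A).card < (A + A).card

noncomputable def aStar : Finset ℝ := {0, 2, 3, 4, 7, 11, 12, 14}

section FreimanModel

variable {G H : Type*} [AddCommGroup G] [AddCommGroup H] [DecidableEq G]

lemma injOn_sub_self_of_injOn_add_self {φ : G →+ H} {A : Finset G}
    (hφ : Set.InjOn φ ↑(A + A)) : Set.InjOn φ ↑(A - A) := by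
  simp only [Set.InjOn, Finset.coe_sub, Set.mem_sub, Finset.mem_coe]
  rintro _ ⟨a, ha, b, hb, rfl⟩ _ ⟨c, hc, d, hd, rfl⟩ h
  rw [map_sub, map_sub, sub_eq_sub_iff_add_eq_add, ← map_add, ← map_add] at h
  exact sub_eq_sub_iff_add_eq_add.mpr <|
    hφ (Finset.add_mem_add ha hd) (Finset.add_mem_add hc hb) h

lemma injOn_of_injOn_add_self [IsAddTorsionFree G] {φ : G →+ H} {A : Finset G}
    (hφ : Set.InjOn φ ↑(A + A)) : Set.InjOn φ A := fun a ha b hb hab =>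
  nsmul_right_injective two_ne_zero <| by
    simpa only [two_nsmul] using
      hφ (Finset.add_mem_add ha ha) (Finset.add_mem_add hb hb) (by simp only [map_add, hab])

lemma isMSTD_image_iff [DecidableEq H] {φ : G →+ H} {A : Finset G}
    (hφ : Set.InjOn φ ↑(A + A)) : IsMSTD (A.image φ) ↔ IsMSTD A := by
  have hsub : A.image φ - A.image φ = (A - A).image φ :=
    (Finset.image_image₂_distrib (map_sub φ)).symm
  rw [IsMSTD, IsMSTD, ← Finset.image_add, hsub, Finset.card_image_of_injOn hφ,
    Finset.card_image_of_injOn (injOn_sub_self_of_injOn_add_self hφ)]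

end FreimanModel

lemma Module.exists_dual_injOn {K M : Type*} [Field K] [Infinite K] [AddCommGroup M]
    [Module K M] (D : Finset M) : ∃ f : Module.Dual K M, Set.InjOn f D := by
  obtain ⟨f, hf⟩ := Module.exists_dual_forall_apply_ne_zero (K := K)
    (fun p : {p : D × D // p.1 ≠ p.2} => (p.1.1 : M) - p.1.2)
    (fun p => sub_ne_zero.mpr (Subtype.coe_ne_coe.mpr p.2))
  refine ⟨f, fun x hx y hy hxy => by_contra fun hne => hf ⟨(⟨x, hx⟩, ⟨y, hy⟩), ?_⟩ ?_⟩
  · simpa using hne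
  · simp [hxy]

lemma exists_addMonoidHom_injOn_add_self_image_eq_intCast (A : Finset ℝ) :
    ∃ φ : ℝ →+ ℝ, Set.InjOn φ ↑(A + A) ∧
      ∃ B : Finset ℤ, B.image (Int.cast : ℤ → ℝ) = A.image φ := by
  obtain ⟨L, hL⟩ := Module.exists_dual_injOn (K := ℚ) (A + A)
  set N : ℕ := ∏ a ∈ A, (L a).den
  have hN : (N : ℚ) ≠ 0 := by simp [N, Finset.prod_ne_zero_iff]
  let φ : ℝ →+ ℝ := (Rat.castHom ℝ : ℚ →+ ℝ).comp (N • L.toAddMonoidHom)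
  have hφ : ∀ x, φ x = ((N * L x : ℚ) : ℝ) := fun x => by simp [φ]
  have hint : ∀ a ∈ A, ∃ n : ℤ, φ a = n := by
    intro a ha
    obtain ⟨k, hk⟩ : (L a).den ∣ N := Finset.dvd_prod_of_mem (fun a => (L a).den) ha
    refine ⟨k * (L a).num, ?_⟩
    have hnum : ((L a).num : ℝ) = (L a : ℝ) * (L a).den := by
      exact_mod_cast (Rat.mul_den_eq_num (L a)).symm
    rw [hφ, hk]
    push_cast
    rw [hnum]
    ring
  refine ⟨φ, fun x hx y hy h => hL hx hy ?_, A.image fun a => ⌊φ a⌋, ?_⟩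
  · rw [hφ, hφ, Rat.cast_inj] at h
    exact mul_left_cancel₀ hN h
  · rw [Finset.image_image]
    refine Finset.image_congr fun a ha => ?_
    obtain ⟨n, hn⟩ := hint a ha
    simp [hn]

lemma eqOn_affine_of_isAddFreimanHom_aStar {g : ℝ → ℝ}
    (hg : IsAddFreimanHom 2 (aStar : Set ℝ) Set.univ g) :
    Set.EqOn g (fun x => (g 2 - g 0) / 2 * x + g 0) aStar := by
  have rel : ∀ a b c d : ℝ, a ∈ aStar ∧ b ∈ aStar ∧ c ∈ aStar ∧ d ∈ aStar →
      a + b = c + d → g a + g b = g c + g d :=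
    fun _ _ _ _ ⟨ha, hb, hc, hd⟩ => hg.add_eq_add ha hb hc hd
  have h4 := rel 0 4 2 2 (by norm_num [aStar]) (by norm_num)
  have h3 := rel 2 4 3 3 (by norm_num [aStar]) (by norm_num)
  have h7 := rel 0 7 3 4 (by norm_num [aStar]) (by norm_num)
  have h14 := rel 0 14 7 7 (by norm_num [aStar]) (by norm_num)
  have h12 := rel 0 14 2 12 (by norm_num [aStar]) (by norm_num)
  have h11 := rel 0 14 3 11 (by norm_num [aStar]) (by norm_num)
  intro x hx
  simp only [aStar, Finset.coe_insert, Finset.coe_singleton, Set.mem_insert_iff,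
    Set.mem_singleton_iff] at hx
  rcases hx with rfl | rfl | rfl | rfl | rfl | rfl | rfl | rfl <;> linarith

lemma exists_affine_eq_of_image_eq {A : Finset ℝ} {φ : ℝ →+ ℝ} (hφ : Set.InjOn φ ↑(A + A))
    {l m : ℝ} (hl : l ≠ 0) (h : A.image φ = aStar.image fun x => l * x + m) :
    ∃ l' m' : ℝ, l' ≠ 0 ∧ A = aStar.image fun x => l' * x + m' := by
  have hφA := injOn_of_injOn_add_self hφ
  set g : ℝ → ℝ := fun x => Function.invFunOn φ A (l * x + m)
  have hg : ∀ s ∈ aStar, g s ∈ A ∧ φ (g s) = l * s + m := fun s hs => by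
    have hmem : l * s + m ∈ A.image φ := h ▸ Finset.mem_image_of_mem _ hs
    obtain ⟨a, ha, hφa⟩ := Finset.mem_image.mp hmem
    exact ⟨Function.invFunOn_mem ⟨a, ha, hφa⟩, Function.invFunOn_eq ⟨a, ha, hφa⟩⟩
  have hA : A = aStar.image g := by
    calc A = (A.image φ).image (Function.invFunOn φ A) := by
          rw [Finset.image_image,
            Finset.image_congr (f := Function.invFunOn φ A ∘ φ) (g := id) hφA.leftInvOn_invFunOn,
            Finset.image_id]
      _ = aStar.image g := by rw [h, Finset.image_image]; rfl
  have hgFreiman : IsAddFreimanHom 2 (aStar : Set ℝ) Set.univ g := by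
    refine isAddFreimanHom_two.mpr ⟨Set.mapsTo_univ _ _, fun s hs t ht u hu v hv hst => ?_⟩
    refine hφ (Finset.add_mem_add (hg s hs).1 (hg t ht).1)
      (Finset.add_mem_add (hg u hu).1 (hg v hv).1) ?_
    simp only [map_add, (hg s hs).2, (hg t ht).2, (hg u hu).2, (hg v hv).2]
    linear_combination l * hst
  have hg20 : g 2 ≠ g 0 := fun h20 => hl <| by
    have := congrArg φ h20
    rw [(hg 2 (by norm_num [aStar])).2, (hg 0 (by norm_num [aStar])).2] at this
    linarith
  exact ⟨(g 2 - g 0) / 2, g 0, div_ne_zero (sub_ne_zero.mpr hg20) two_ne_zero,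
    hA.trans (Finset.image_congr (eqOn_affine_of_isAddFreimanHom_aStar hgFreiman))⟩

/-- Theorem 8 (Newman): assuming Hegarty's classification of 8-element MSTD
sets of integers, every 8-element MSTD set of real numbers is affinely
isomorphic to `A* = {0,2,3,4,7,11,12,14}`. -/
theorem stmt_15
    (hegarty : ∀ B : Finset ℤ, (B - B).card < (B + B).card →
      8 ≤ B.card ∧ (B.card = 8 → ∃ l m : ℝ, l ≠ 0 ∧
        B.image (fun x : ℤ => (x : ℝ)) =
          ({0, 2, 3, 4, 7, 11, 12, 14} : Finset ℝ).image (fun x => l * x + m)))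
    (A : Finset ℝ) (hMSTD : (A - A).card < (A + A).card) (hcard : A.card = 8) :
    ∃ l m : ℝ, l ≠ 0 ∧
      A = ({0, 2, 3, 4, 7, 11, 12, 14} : Finset ℝ).image (fun x => l * x + m) := by
  obtain ⟨φ, hφ, B, hB⟩ := exists_addMonoidHom_injOn_add_self_image_eq_intCast A
  have hcast : Set.InjOn (Int.castAddHom ℝ) ↑(B + B) := (Int.cast_injective (α := ℝ)).injOn
  have hBMSTD : IsMSTD B := by
    rw [← isMSTD_image_iff hcast]
    exact hB ▸ (isMSTD_image_iff hφ).mpr hMSTD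
  have hBcard : B.card = 8 := by
    rw [← Finset.card_image_of_injective B (Int.cast_injective (α := ℝ)), hB,
      Finset.card_image_of_injOn (injOn_of_injOn_add_self hφ), hcard]
  obtain ⟨l, m, hl, hBA⟩ := (hegarty B hBMSTD).2 hBcard
  exact exists_affine_eq_of_image_eq hφ hl (hB ▸ hBA)
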